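/- arXiv:0707.3495 — 4 statements merged into one kernel-verified Lean document; each statement's English description precedes it below -/
import Mathlib

section
/- Let G be a finite group, N a normal subgroup of G, and F a field of characteristic p > 0. Then the ideal F[G]·J(F[N]) of the group algebra F[G] generated by the Jacobson radical of F[N] is a nilpotent two-sided ideal of F[G]; in particular F[G]·J(F[N]) ⊆ J(F[G]). -/
/-! Let `S ⊆ F[G]` be the image of `J(F[N])`. Conjugation by `g ∈ G` induces an automorphism of
`F[N]`, which preserves `J(F[N])`, and `s * g = g * s^g`; hence `S * F[G] ⊆ F[G] * S`. This makes
`F[G] * S` a two-sided ideal with `(F[G] * S)^n ⊆ F[G] * S^n`. Since `F[N]` is finite-dimensional,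
hence Artinian, `J(F[N])` is nilpotent, so `F[G] * S` is a nilpotent ideal and therefore lies in
`J(F[G])`. -/
open MonoidAlgebra

namespace Submodule

variable {R A : Type*} [CommSemiring R]

theorem top_mul_pow_le_top_mul_pow [Semiring A] [Algebra R A] (S : Submodule R A)
    (h : S * ⊤ ≤ ⊤ * S) (n : ℕ) : (⊤ * S) ^ n ≤ ⊤ * S ^ n := by
  induction n with
  | zero => simp
  | succ n ih =>
    calc (⊤ * S) ^ (n + 1) = ⊤ * S * (⊤ * S) ^ n := pow_succ' _ _
      _ ≤ ⊤ * (S * ⊤) * S ^ n := by rw [mul_assoc, mul_assoc, mul_assoc]; gcongr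
      _ ≤ ⊤ * (⊤ * S) * S ^ n := by gcongr
      _ ≤ ⊤ * S ^ (n + 1) := by rw [← mul_assoc, pow_succ', ← mul_assoc]; gcongr; exact le_top

theorem top_mul_mul_top_le [Semiring A] [Algebra R A] {S : Submodule R A} (h : S * ⊤ ≤ ⊤ * S) :
    ⊤ * S * ⊤ ≤ ⊤ * S :=
  calc ⊤ * S * ⊤ = ⊤ * (S * ⊤) := mul_assoc _ _ _
    _ ≤ ⊤ * (⊤ * S) := by gcongr
    _ ≤ ⊤ * S := by rw [← mul_assoc]; gcongr; exact le_top

theorem mem_jacobson_bot_of_pow_eq_bot [Ring A] [Algebra R A] {K : Submodule R A}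
    (hK : ⊤ * K ≤ K) {n : ℕ} (hn : K ^ n = ⊥) {x : A} (hx : x ∈ K) :
    x ∈ (⊥ : Ideal A).jacobson := by
  refine Ideal.mem_jacobson_iff.2 fun y => ?_
  have hyx : y * x ∈ K := hK (mul_mem_mul mem_top hx)
  have hpow : (y * x) ^ n = 0 := by simpa [hn] using pow_mem_pow K hyx n
  obtain ⟨u, hu⟩ := IsNilpotent.isUnit_add_one ⟨n, hpow⟩
  refine ⟨↑u⁻¹, ?_⟩
  rw [Ideal.mem_bot, mul_assoc, ← mul_add_one, ← hu, Units.inv_mul, sub_self]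

end Submodule

theorem Ideal.exists_pow_restrictScalars_jacobson_bot_eq_bot (F A : Type*) [Field F] [Ring A]
    [Algebra F A] [Module.Finite F A] :
    ∃ n, ((⊥ : Ideal A).jacobson.restrictScalars F) ^ (n + 1) = ⊥ := by
  have : IsArtinianRing A := IsArtinianRing.of_finite F A
  obtain ⟨n, hn⟩ := IsArtinianRing.isNilpotent_jacobson_bot (R := A)
  refine ⟨n, ?_⟩
  rw [← Submodule.restrictScalars_pow n.add_one_ne_zero, Submodule.pow_succ, hn, zero_mul]
  rfl

theorem Ideal.apply_mem_jacobson_bot {R E : Type*} [Ring R] [EquivLike E R R]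
    [RingEquivClass E R R] (e : E) {x : R} (hx : x ∈ (⊥ : Ideal R).jacobson) :
    e x ∈ (⊥ : Ideal R).jacobson := by
  have hmap := Ideal.map_jacobson_of_bijective (I := ⊥) (f := (e : R →+* R)) (EquivLike.bijective e)
  rw [Ideal.map_bot] at hmap
  exact hmap ▸ Ideal.mem_map_of_mem _ hx

namespace MonoidAlgebra

variable {k G : Type*} [CommSemiring k] [Group G] {N : Subgroup G} [N.Normal]

theorem mapDomain_subtype_mul_single (x : MonoidAlgebra k N) (g : G) :
    mapDomainAlgHom k k N.subtype x * single g 1 =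
      single g 1 * mapDomainAlgHom k k N.subtype (domCongr k k (MulAut.conjNormal g⁻¹) x) := by
  induction x using MonoidAlgebra.induction_linear with
  | zero => simp
  | add x y hx hy => simp only [map_add, add_mul, mul_add, hx, hy]
  | single n c => simp [mapDomainAlgHom_apply, single_mul_single, mul_assoc]

theorem map_mul_top_le_top_mul_map {I : Submodule k (MonoidAlgebra k N)}
    (hI : ∀ g : G, ∀ x ∈ I, domCongr k k (MulAut.conjNormal g) x ∈ I) :
    I.map (mapDomainAlgHom k k N.subtype).toLinearMap * ⊤ ≤
      ⊤ * I.map (mapDomainAlgHom k k N.subtype).toLinearMap := by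
  refine Submodule.mul_le.2 ?_
  rintro _ ⟨x, hx, rfl⟩ b -
  induction b using MonoidAlgebra.induction_linear with
  | zero => simp
  | add b c hb hc => rw [mul_add]; exact Submodule.add_mem _ hb hc
  | single g c =>
    rw [← mul_one c, ← smul_single', mul_smul_comm, AlgHom.toLinearMap_apply,
      mapDomain_subtype_mul_single]
    exact Submodule.smul_mem _ c
      (Submodule.mul_mem_mul Submodule.mem_top (Submodule.mem_map_of_mem (hI _ x hx)))

end MonoidAlgebra

theorem fg_jacobson_of_normal_subgroup_nilpotent_general
    (F : Type) [Field F]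
    (G : Type) [Group G] [Fintype G] (N : Subgroup G) (hN : N.Normal) :
    -- the inclusion F[N] → F[G]
    let ι : MonoidAlgebra F N →ₐ[F] MonoidAlgebra F G :=
      MonoidAlgebra.mapDomainAlgHom F F N.subtype
    -- J(F[N]) viewed as a subset of F[G]
    let Jset : Set (MonoidAlgebra F G) :=
      ι '' ((⊥ : Ideal (MonoidAlgebra F N)).jacobson : Set (MonoidAlgebra F N))
    -- the ideal F[G]·J(F[N]) of F[G]
    let K : Submodule F (MonoidAlgebra F G) :=
      Submodule.span F {x : MonoidAlgebra F G | ∃ a : MonoidAlgebra F G, ∃ j ∈ Jset, x = a * j}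
    -- K is a two-sided ideal
    (∀ x ∈ K, ∀ r : MonoidAlgebra F G, r * x ∈ K ∧ x * r ∈ K) ∧
    -- K is nilpotent
    (∃ n : ℕ, 0 < n ∧ K ^ n = ⊥) ∧
    -- in particular K ⊆ J(F[G])
    (K : Set (MonoidAlgebra F G)) ⊆
      ((⊥ : Ideal (MonoidAlgebra F G)).jacobson : Set (MonoidAlgebra F G)) := by
  intro ι Jset K
  set J := (⊥ : Ideal (MonoidAlgebra F N)).jacobson.restrictScalars F
  have hK : K = ⊤ * J.map ι.toLinearMap := by
    rw [Submodule.mul_eq_span_mul_set]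
    refine congrArg (Submodule.span F) (Set.ext fun x => ⟨?_, ?_⟩)
    · rintro ⟨a, j, hj, rfl⟩
      exact ⟨a, trivial, j, hj, rfl⟩
    · rintro ⟨a, -, j, hj, rfl⟩
      exact ⟨a, j, hj, rfl⟩
  have hJ : J.map ι.toLinearMap * ⊤ ≤ ⊤ * J.map ι.toLinearMap :=
    map_mul_top_le_top_mul_map fun g _ hx =>
      (Ideal.apply_mem_jacobson_bot (domCongr F F (MulAut.conjNormal g)) hx :)
  have hleft : ⊤ * K ≤ K := by
    rw [hK, ← mul_assoc]; gcongr; exact le_top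
  obtain ⟨n, hn⟩ := Ideal.exists_pow_restrictScalars_jacobson_bot_eq_bot F (MonoidAlgebra F N)
  have hnil : K ^ (n + 1) = ⊥ := by
    rw [eq_bot_iff, hK]
    calc (⊤ * J.map ι.toLinearMap) ^ (n + 1) ≤ ⊤ * J.map ι.toLinearMap ^ (n + 1) :=
          Submodule.top_mul_pow_le_top_mul_pow _ hJ _
      _ = ⊥ := by rw [← Submodule.map_pow, hn, Submodule.map_bot, Submodule.mul_bot]
  refine ⟨fun x hx r => ⟨hleft (Submodule.mul_mem_mul Submodule.mem_top hx), ?_⟩,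
    ⟨n + 1, n.succ_pos, hnil⟩, fun x hx => Submodule.mem_jacobson_bot_of_pow_eq_bot hleft hnil hx⟩
  rw [hK] at hx ⊢
  exact Submodule.top_mul_mul_top_le hJ (Submodule.mul_mem_mul hx Submodule.mem_top)

/-- Let `G` be a finite group, `N ⊴ G`, `F` a field of characteristic `p > 0`.
Then the ideal `F[G]·J(F[N])` of `F[G]` generated by the Jacobson radical of `F[N]`
(viewed inside `F[G]` via the inclusion `N ≤ G`) is a nilpotent two-sided ideal of `F[G]`;
in particular it is contained in `J(F[G])`. -/
theorem fg_jacobson_of_normal_subgroup_nilpotent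
    (F : Type) [Field F] (p : ℕ) (hp : 0 < p) (hchar : CharP F p)
    (G : Type) [Group G] [Fintype G] (N : Subgroup G) (hN : N.Normal) :
    -- the inclusion F[N] → F[G]
    let ι : MonoidAlgebra F N →ₐ[F] MonoidAlgebra F G :=
      MonoidAlgebra.mapDomainAlgHom F F N.subtype
    -- J(F[N]) viewed as a subset of F[G]
    let Jset : Set (MonoidAlgebra F G) :=
      ι '' ((⊥ : Ideal (MonoidAlgebra F N)).jacobson : Set (MonoidAlgebra F N))
    -- the ideal F[G]·J(F[N]) of F[G]
    let K : Submodule F (MonoidAlgebra F G) :=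
      Submodule.span F {x : MonoidAlgebra F G | ∃ a : MonoidAlgebra F G, ∃ j ∈ Jset, x = a * j}
    -- K is a two-sided ideal
    (∀ x ∈ K, ∀ r : MonoidAlgebra F G, r * x ∈ K ∧ x * r ∈ K) ∧
    -- K is nilpotent
    (∃ n : ℕ, 0 < n ∧ K ^ n = ⊥) ∧
    -- in particular K ⊆ J(F[G])
    (K : Set (MonoidAlgebra F G)) ⊆
      ((⊥ : Ideal (MonoidAlgebra F G)).jacobson : Set (MonoidAlgebra F G)) :=
  fg_jacobson_of_normal_subgroup_nilpotent_general F G N hN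
end

section
/- Let G be a finite group, N a normal subgroup of G, F a field of characteristic p > 0, and I the right annihilator of J(F[N]) in F[G]. Let e be a primitive idempotent of F[G] and P = F[G]e the corresponding indecomposable left ideal (principal indecomposable module), and note I ∩ P = I·P. Then either I·P = P, or I·P ⊆ J(F[G])·P; in the latter case P/(I·P) is a nonzero indecomposable module over F[G]/I whose head P/(J(F[G])·P + I·P) is isomorphic to the head P/(J(F[G])·P) of P. -/
/-!
As `F[G]` is finite-dimensional and `e` is primitive, `J·P = J ∩ P` is the unique maximal
submodule of `P = F[G]e`. Indeed, a left ideal `X ⊆ P` not contained in `J` is not nil, so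
Fitting's lemma gives a nonzero idempotent `f ∈ X`; splitting `e = ef + (e - ef)` and using
primitivity yields `e = ef ∈ X`. Conjugation by `G` preserves `J(F[N])` because `N` is normal,
so `I` is a two-sided ideal and `I·P = I ∩ P`. The rest is lattice theory: a proper `I·P` lies
in `J·P`, and `P` is not the sum of two proper submodules because the idempotent `e ≠ 0` is not
in `J`.
-/

open MonoidAlgebra

section CommMonoid
variable {M : Type*} [CommMonoid M] {x y : M} {n : ℕ}

lemma pow_eq_pow_add_mul_pow (h : x ^ n = x ^ (n + 1) * y) (k : ℕ) :
    x ^ n = x ^ (n + k) * y ^ k := by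
  induction k with
  | zero => simp
  | succ k ih =>
    rw [ih, pow_add x n k, h]
    simp only [pow_add, pow_succ]
    ac_rfl

lemma isIdempotentElem_pow_mul_pow (h : x ^ n = x ^ (n + 1) * y) :
    IsIdempotentElem (x ^ n * y ^ n) := by
  calc x ^ n * y ^ n * (x ^ n * y ^ n) = x ^ (n + n) * y ^ n * y ^ n := by rw [pow_add]; ac_rfl
    _ = x ^ n * y ^ n := by rw [← pow_eq_pow_add_mul_pow h]

end CommMonoid

section Ring
variable {R : Type*} [Ring R]

def IsPrimitiveIdempotent (e : R) : Prop :=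
  IsIdempotentElem e ∧ ∀ a b : R, IsIdempotentElem a → IsIdempotentElem b →
    a * b = 0 → b * a = 0 → e = a + b → a = 0 ∨ b = 0

lemma IsIdempotentElem.mul_eq_self_of_mem_span_singleton {e x : R} (he : IsIdempotentElem e)
    (hx : x ∈ Ideal.span {e}) : x * e = x := by
  obtain ⟨a, rfl⟩ := Ideal.mem_span_singleton'.mp hx
  rw [mul_assoc, he.eq]

lemma IsIdempotentElem.eq_zero_of_mem_jacobson {e : R} (he : IsIdempotentElem e)
    (hJ : e ∈ (⊥ : Ideal R).jacobson) : e = 0 := by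
  obtain ⟨z, hz⟩ := Ideal.mem_jacobson_iff.mp hJ (-1)
  rw [Ideal.mem_bot, sub_eq_zero] at hz
  have hinv : z * (1 - e) = 1 := (by noncomm_ring : z * (1 - e) = z * -1 * e + z).trans hz
  calc e = z * (1 - e) * e := by rw [hinv, one_mul]
    _ = 0 := by rw [mul_assoc, he.one_sub_mul_self, mul_zero]

lemma mem_jacobson_bot_of_forall_isNilpotent {x : R} (h : ∀ a, IsNilpotent (a * x)) :
    x ∈ (⊥ : Ideal R).jacobson := by
  refine Ideal.mem_jacobson_iff.mpr fun y => ?_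
  obtain ⟨u, hu⟩ := (h y).isUnit_one_add
  have hinv : ↑u⁻¹ * (1 + y * x) = 1 := by rw [← hu, Units.inv_mul]
  refine ⟨↑u⁻¹, ?_⟩
  rw [Ideal.mem_bot, ← hinv]
  noncomm_ring

lemma IsPrimitiveIdempotent.mem_span_singleton_of_mul_eq {e f : R}
    (he : IsPrimitiveIdempotent e) (hf : IsIdempotentElem f) (hf0 : f ≠ 0) (hfe : f * e = f) :
    e ∈ Ideal.span {f} := by
  have hg : IsIdempotentElem (e * f) := by
    rw [IsIdempotentElem, mul_assoc, ← mul_assoc f, hfe, hf.eq]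
  have hge : e * f * e = e * f := by rw [mul_assoc, hfe]
  have heg : e * (e * f) = e * f := by rw [← mul_assoc, he.1.eq]
  have hc : IsIdempotentElem (e - e * f) := hg.sub he.1 hge heg
  rcases he.2 _ _ hg hc (by rw [mul_sub, hg.eq, hge, sub_self])
      (by rw [sub_mul, hg.eq, heg, sub_self]) (add_sub_cancel _ _).symm with h | h
  · refine absurd ?_ hf0
    calc f = f * (e * f) := by rw [← mul_assoc, hfe, hf.eq]
      _ = 0 := by rw [h, mul_zero]
  · exact Ideal.mem_span_singleton'.mpr ⟨e, (sub_eq_zero.mp h).symm⟩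

lemma inf_span_singleton_eq_span_image2 (I : Ideal R) [I.IsTwoSided] {e : R}
    (he : IsIdempotentElem e) :
    I ⊓ Ideal.span {e} =
      Submodule.span R (Set.image2 (· * ·) (I : Set R) (Ideal.span {e})) := by
  refine le_antisymm (fun x hx => ?_) (Submodule.span_le.mpr ?_)
  · rw [← he.mul_eq_self_of_mem_span_singleton hx.2]
    exact Submodule.subset_span (Set.mem_image2_of_mem hx.1 (Ideal.mem_span_singleton_self e))
  · rintro _ ⟨a, ha, b, hb, rfl⟩
    exact ⟨I.mul_mem_right b ha, (Ideal.span {e}).mul_mem_left a hb⟩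

end Ring

-- Fitting's lemma in the commutative Artinian algebra `F[x]`.
lemma exists_isIdempotentElem_mem_span_singleton (F : Type*) {A : Type*} [Field F] [Ring A]
    [Algebra F A] [FiniteDimensional F A] {x : A} (hx : ¬IsNilpotent x) :
    ∃ f ∈ Ideal.span {x}, IsIdempotentElem f ∧ f ≠ 0 := by
  let S := Algebra.adjoin F {x}
  have : IsArtinianRing S := IsArtinianRing.of_finite F S
  let xs : S := ⟨x, Algebra.self_mem_adjoin_singleton F x⟩
  obtain ⟨n, y, hy⟩ := IsArtinian.exists_pow_succ_smul_dvd xs (1 : S)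
  have h : xs ^ n = xs ^ (n + 1) * y := by simpa using hy.symm
  refine ⟨(xs ^ n * y ^ n : S), ?_, ?_, ?_⟩
  · have : xs ^ n * y ^ n = (y ^ (n + 1) * xs ^ n) * xs := by
      nth_rw 1 [h]; ring
    rw [this, Ideal.mem_span_singleton']
    exact ⟨_, rfl⟩
  · exact (isIdempotentElem_pow_mul_pow h).map S.val
  · intro h0
    apply hx
    refine ⟨n, ?_⟩
    have : xs ^ n = 0 := by
      rw [pow_eq_pow_add_mul_pow h n, pow_add, mul_assoc]
      exact mul_eq_zero_of_right _ (Subtype.ext h0)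
    simpa using congrArg Subtype.val this

lemma exists_isIdempotentElem_mem_of_not_le_jacobson (F : Type*) {A : Type*} [Field F] [Ring A]
    [Algebra F A] [FiniteDimensional F A] {X : Ideal A}
    (hX : ¬X ≤ (⊥ : Ideal A).jacobson) : ∃ f ∈ X, IsIdempotentElem f ∧ f ≠ 0 := by
  obtain ⟨x, hxX, hxJ⟩ := Set.not_subset.mp hX
  obtain ⟨a, ha⟩ : ∃ a, ¬IsNilpotent (a * x) := by
    by_contra! h
    exact hxJ (mem_jacobson_bot_of_forall_isNilpotent h)
  obtain ⟨f, hfx, hf⟩ := exists_isIdempotentElem_mem_span_singleton F ha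
  exact ⟨f, (Ideal.span_singleton_le_iff_mem X).mpr (X.mul_mem_left a hxX) hfx, hf⟩

lemma IsPrimitiveIdempotent.le_jacobson_of_lt (F : Type*) {A : Type*} [Field F] [Ring A]
    [Algebra F A] [FiniteDimensional F A] {e : A} (he : IsPrimitiveIdempotent e)
    {X : Ideal A} (hX : X < Ideal.span {e}) : X ≤ (⊥ : Ideal A).jacobson := by
  by_contra hXJ
  obtain ⟨f, hfX, hf, hf0⟩ := exists_isIdempotentElem_mem_of_not_le_jacobson F hXJ
  have hfe := he.1.mul_eq_self_of_mem_span_singleton (hX.le hfX)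
  have heX : e ∈ X :=
    (Ideal.span_singleton_le_iff_mem X).mpr hfX (he.mem_span_singleton_of_mul_eq hf hf0 hfe)
  exact hX.not_ge ((Ideal.span_singleton_le_iff_mem X).mpr heX)

section GroupAlgebra
variable {F G : Type*} [Group G] (N : Subgroup G) [N.Normal]

lemma mapDomainAlgHom_subtype_mul_single [CommSemiring F] (g : G) (y : MonoidAlgebra F N) :
    mapDomainAlgHom F F N.subtype y * single g 1 =
      single g 1 * mapDomainAlgHom F F N.subtype (domCongr F F (MulAut.conjNormal g⁻¹) y) := by
  induction y using MonoidAlgebra.induction_on with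
  | of n =>
    simp only [MonoidAlgebra.of_apply, domCongr_single, mapDomainAlgHom_apply,
      MonoidAlgebra.mapDomain_single, single_mul_single, mul_one, Subgroup.coe_subtype,
      MulAut.conjNormal_apply, inv_inv]
    group
  | add y z hy hz => simp only [map_add, add_mul, mul_add, hy, hz]
  | smul c y h => simp only [map_smul, smul_mul_assoc, mul_smul_comm, h]

variable [CommRing F]

lemma exists_mem_jacobson_mul_single_eq (g : G) {y : MonoidAlgebra F N}
    (hy : y ∈ (⊥ : Ideal (MonoidAlgebra F N)).jacobson) :
    ∃ y' ∈ (⊥ : Ideal (MonoidAlgebra F N)).jacobson,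
      mapDomainAlgHom F F N.subtype y * single g 1 =
        single g 1 * mapDomainAlgHom F F N.subtype y' := by
  let σ : MonoidAlgebra F N ≃+* MonoidAlgebra F N :=
    (domCongr F F (MulAut.conjNormal g⁻¹ : N ≃* N)).toRingEquiv
  refine ⟨σ y, ?_, mapDomainAlgHom_subtype_mul_single N g y⟩
  have hσ : Function.Bijective (σ : MonoidAlgebra F N →+* MonoidAlgebra F N) := σ.bijective
  have := Ideal.mem_map_of_mem (σ : MonoidAlgebra F N →+* MonoidAlgebra F N) hy
  rwa [Ideal.map_jacobson_of_bijective hσ, Ideal.map_bot] at this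

variable (F) in
def jacobsonAnnihilator : Ideal (MonoidAlgebra F G) where
  carrier := {α | ∀ x ∈ mapDomainAlgHom F F N.subtype ''
    ((⊥ : Ideal (MonoidAlgebra F N)).jacobson : Set (MonoidAlgebra F N)), x * α = 0}
  add_mem' ha hb x hx := by rw [mul_add, ha x hx, hb x hx, add_zero]
  zero_mem' x _ := mul_zero x
  smul_mem' c α hα := by
    rintro _ ⟨y, hy, rfl⟩
    induction c using MonoidAlgebra.induction_on with
    | of g =>
      obtain ⟨y', hy', hyy'⟩ := exists_mem_jacobson_mul_single_eq N g hy
      rw [smul_eq_mul, MonoidAlgebra.of_apply, ← mul_assoc, hyy', mul_assoc,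
        hα _ ⟨y', hy', rfl⟩, mul_zero]
    | add c d hc hd => rw [add_smul, mul_add, hc, hd, add_zero]
    | smul r c h => rw [smul_assoc, mul_smul_comm, h, smul_zero]

instance : (jacobsonAnnihilator F N).IsTwoSided :=
  ⟨fun c hα x hx => by rw [← mul_assoc, hα x hx, zero_mul]⟩

end GroupAlgebra

theorem principal_indecomposable_mod_annihilator_general
    (F : Type) [Field F]
    (G : Type) [Group G] [Fintype G] (N : Subgroup G) (hN : N.Normal)
    (e : MonoidAlgebra F G) (he : IsIdempotentElem e) (he0 : e ≠ 0)
    (hprim : ∀ a b : MonoidAlgebra F G, IsIdempotentElem a → IsIdempotentElem b →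
      a * b = 0 → b * a = 0 → e = a + b → a = 0 ∨ b = 0) :
    let ι : MonoidAlgebra F N →ₐ[F] MonoidAlgebra F G :=
      MonoidAlgebra.mapDomainAlgHom F F N.subtype
    let Jset : Set (MonoidAlgebra F G) :=
      ι '' ((⊥ : Ideal (MonoidAlgebra F N)).jacobson : Set (MonoidAlgebra F N))
    let Iset : Set (MonoidAlgebra F G) := {α : MonoidAlgebra F G | ∀ x ∈ Jset, x * α = 0}
    -- P = F[G]·e
    let P : Ideal (MonoidAlgebra F G) := Ideal.span {e}
    -- I·P
    let IP : Ideal (MonoidAlgebra F G) :=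
      Submodule.span (MonoidAlgebra F G) (Set.image2 (· * ·) Iset (P : Set (MonoidAlgebra F G)))
    -- J(F[G])·P
    let JP : Ideal (MonoidAlgebra F G) :=
      Submodule.span (MonoidAlgebra F G)
        (Set.image2 (· * ·)
          (((⊥ : Ideal (MonoidAlgebra F G)).jacobson : Set (MonoidAlgebra F G)))
          (P : Set (MonoidAlgebra F G)))
    -- note that I ∩ P = I·P
    (Iset ∩ (P : Set (MonoidAlgebra F G)) = (IP : Set (MonoidAlgebra F G))) ∧
    -- the dichotomy
    (IP = P ∨ IP ≤ JP) ∧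
    -- in the latter case (I·P ≠ P), P/(I·P) is nonzero, its head P/(J·P + I·P) equals
    -- (hence is isomorphic to) the head P/(J·P), and P/(I·P) is indecomposable
    (IP ≠ P →
      (JP ⊔ IP = JP) ∧
      ¬ ∃ X Y : Ideal (MonoidAlgebra F G),
        IP ≤ X ∧ X ≤ P ∧ IP ≤ Y ∧ Y ≤ P ∧
        X ⊓ Y = IP ∧ X ⊔ Y = P ∧ X ≠ IP ∧ Y ≠ IP) := by
  intro ι Jset Iset P IP JP
  have hI : jacobsonAnnihilator F N ⊓ P = IP := inf_span_singleton_eq_span_image2 _ he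
  have hJ : (⊥ : Ideal (MonoidAlgebra F G)).jacobson ⊓ P = JP :=
    inf_span_singleton_eq_span_image2 _ he
  have hIP : IP ≤ P := hI ▸ inf_le_right
  have hP : ¬P ≤ JP := fun h =>
    he0 (he.eq_zero_of_mem_jacobson (hJ ▸ h (Ideal.mem_span_singleton_self e)).1)
  have hmax : ∀ X ≤ P, X ≠ P → X ≤ JP := fun X hXP hX => hJ ▸
    le_inf (IsPrimitiveIdempotent.le_jacobson_of_lt F ⟨he, hprim⟩ (lt_of_le_of_ne hXP hX)) hXP
  refine ⟨congrArg SetLike.coe hI, (eq_or_ne IP P).imp_right (hmax IP hIP),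
    fun hne => ⟨sup_eq_left.mpr (hmax IP hIP hne), ?_⟩⟩
  rintro ⟨X, Y, -, hXP, -, hYP, hinf, hsup, hX, hY⟩
  have hXne : X ≠ P := by rintro rfl; exact hY (by rw [← hinf, inf_eq_right.mpr hYP])
  have hYne : Y ≠ P := by rintro rfl; exact hX (by rw [← hinf, inf_eq_left.mpr hXP])
  exact hP (hsup ▸ sup_le (hmax X hXP hXne) (hmax Y hYP hYne))

/-- Let `I` be the right annihilator of `J(F[N])` in `F[G]`, `e` a primitive
idempotent of `F[G]` and `P = F[G]e` the corresponding principal indecomposable left ideal;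
note `I ∩ P = I·P`.  Then either `I·P = P`, or `I·P ⊆ J(F[G])·P`; in the latter case
`P/(I·P)` is a nonzero indecomposable `F[G]/I`-module whose head `P/(J(F[G])·P + I·P)` is
isomorphic to the head `P/(J(F[G])·P)` of `P`. -/
theorem principal_indecomposable_mod_annihilator
    (F : Type) [Field F] (p : ℕ) (hp : 0 < p) (hchar : CharP F p)
    (G : Type) [Group G] [Fintype G] (N : Subgroup G) (hN : N.Normal)
    (e : MonoidAlgebra F G) (he : IsIdempotentElem e) (he0 : e ≠ 0)
    (hprim : ∀ a b : MonoidAlgebra F G, IsIdempotentElem a → IsIdempotentElem b →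
      a * b = 0 → b * a = 0 → e = a + b → a = 0 ∨ b = 0) :
    let ι : MonoidAlgebra F N →ₐ[F] MonoidAlgebra F G :=
      MonoidAlgebra.mapDomainAlgHom F F N.subtype
    let Jset : Set (MonoidAlgebra F G) :=
      ι '' ((⊥ : Ideal (MonoidAlgebra F N)).jacobson : Set (MonoidAlgebra F N))
    let Iset : Set (MonoidAlgebra F G) := {α : MonoidAlgebra F G | ∀ x ∈ Jset, x * α = 0}
    -- P = F[G]·e
    let P : Ideal (MonoidAlgebra F G) := Ideal.span {e}
    -- I·P
    let IP : Ideal (MonoidAlgebra F G) :=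
      Submodule.span (MonoidAlgebra F G) (Set.image2 (· * ·) Iset (P : Set (MonoidAlgebra F G)))
    -- J(F[G])·P
    let JP : Ideal (MonoidAlgebra F G) :=
      Submodule.span (MonoidAlgebra F G)
        (Set.image2 (· * ·)
          (((⊥ : Ideal (MonoidAlgebra F G)).jacobson : Set (MonoidAlgebra F G)))
          (P : Set (MonoidAlgebra F G)))
    -- note that I ∩ P = I·P
    (Iset ∩ (P : Set (MonoidAlgebra F G)) = (IP : Set (MonoidAlgebra F G))) ∧
    -- the dichotomy
    (IP = P ∨ IP ≤ JP) ∧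
    -- in the latter case (I·P ≠ P), P/(I·P) is nonzero, its head P/(J·P + I·P) equals
    -- (hence is isomorphic to) the head P/(J·P), and P/(I·P) is indecomposable
    (IP ≠ P →
      (JP ⊔ IP = JP) ∧
      ¬ ∃ X Y : Ideal (MonoidAlgebra F G),
        IP ≤ X ∧ X ≤ P ∧ IP ≤ Y ∧ Y ≤ P ∧
        X ⊓ Y = IP ∧ X ⊔ Y = P ∧ X ≠ IP ∧ Y ≠ IP) :=
  principal_indecomposable_mod_annihilator_general F G N hN e he he0 hprim
end

section
/- Let G be a finite group, N a normal subgroup of G, F a field of characteristic p > 0, and I the right annihilator of J(F[N]) in F[G]. Let E be a simple F[G]-module and P a projective cover of E, i.e., a projective indecomposable F[G]-module with P/(J(F[G])·P) ≅ E. Then I·E = 0 (so that E is a module over F[G]/I, necessarily simple) if and only if I·P ≠ P; in that case P/(I·P) is a projective cover of E over F[G]/I. -/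
open MonoidAlgebra

/-!
Over the Artinian ring `F[G]` the radical `J = J(F[G])` is nilpotent, so `J·P` is superfluous in
`P` (if `X + J·P = P` then `X + Jⁿ·P = P` for every `n`), and `P → P/J·P ≅ E` is an essential
epimorphism. As `E` is simple, `π(I·P)` is `0` or `E`; in the second case `I·P + J·P = P`, hence
`I·P = P`. When `I·E = 0` we have `I·P ≤ J·P`, so the essential epimorphism descends to `P/I·P`,
and lifts of maps from `P` into modules killed by `I` factor through `P/I·P`.
-/

open scoped Pointwise

namespace Submodule

variable {R M N : Type*} [Ring R] [AddCommGroup M] [Module R M] [AddCommGroup N] [Module R N]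

def IsSuperfluous (K : Submodule R M) : Prop :=
  ∀ X : Submodule R M, X ⊔ K = ⊤ → X = ⊤

theorem IsSuperfluous.map {K : Submodule R M} (hK : K.IsSuperfluous) {f : M →ₗ[R] N}
    (hf : Function.Surjective f) : (K.map f).IsSuperfluous := by
  intro X hX
  have hker : LinearMap.ker f ≤ X.comap f ⊔ K :=
    le_sup_of_le_left fun m hm => by simp [LinearMap.mem_ker.1 hm]
  have hcomap : X.comap f ⊔ K = ⊤ := by
    rw [← sup_eq_left.2 hker, ← comap_map_eq, map_sup, map_comap_eq_of_surjective hf, hX,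
      comap_top]
  rw [← map_comap_eq_of_surjective hf X, hK _ hcomap, map_top, LinearMap.range_eq_top.2 hf]

theorem isSuperfluous_smul_top_of_isNilpotent {I : Ideal R} (hI : IsNilpotent I) :
    (I • ⊤ : Submodule R M).IsSuperfluous := by
  intro X hX
  have hpow : ∀ n, X ⊔ (I ^ n) • ⊤ = ⊤ := by
    intro n
    induction n with
    | zero => rw [Submodule.pow_zero, Ideal.one_eq_top, top_smul, sup_top_eq]
    | succ n ih =>
      calc X ⊔ (I ^ (n + 1)) • ⊤ = X ⊔ (I ^ n) • X ⊔ (I ^ n) • I • (⊤ : Submodule R M) := by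
            rw [Submodule.pow_succ, Submodule.mul_smul,
              sup_eq_left.2 (smul_le_right : I ^ n • X ≤ X)]
        _ = ⊤ := by rw [sup_assoc, ← smul_sup, hX, ih]
  obtain ⟨n, hn⟩ := hI
  simpa [hn] using hpow n

theorem span_setOf_smul_eq_set_smul_top (S : Set R) :
    span R {x : M | ∃ s ∈ S, ∃ m : M, x = s • m} = S • ⊤ :=
  le_antisymm (span_le.2 fun _ ⟨_, hs, _, hx⟩ => hx ▸ mem_set_smul_of_mem_mem hs mem_top)
    (set_smul_le _ _ _ fun _ m hs _ => subset_span ⟨_, hs, m, rfl⟩)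

theorem set_smul_top_le_ker {S : Set R} (hS : ∀ s ∈ S, ∀ n : N, s • n = 0) (f : M →ₗ[R] N) :
    S • ⊤ ≤ LinearMap.ker f :=
  set_smul_le _ _ _ fun s m hs _ => by simp [hS s hs]

theorem smul_eq_zero_of_mem_of_quotient_set_smul_top {S : Set R} {s : R} (hs : s ∈ S)
    (q : M ⧸ (S • ⊤ : Submodule R M)) : s • q = 0 := by
  induction q using Quotient.induction_on with
  | H m => simpa [← Quotient.mk_smul] using mem_set_smul_of_mem_mem hs (mem_top (x := m))

theorem liftQ_surjective {K : Submodule R M} {f : M →ₗ[R] N} (hK : K ≤ LinearMap.ker f)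
    (hf : Function.Surjective f) : Function.Surjective (K.liftQ f hK) := by
  rw [← LinearMap.range_eq_top, range_liftQ, LinearMap.range_eq_top.2 hf]

theorem IsSuperfluous.ker_liftQ {K : Submodule R M} {f : M →ₗ[R] N} (hK : K ≤ LinearMap.ker f)
    (hf : (LinearMap.ker f).IsSuperfluous) : (LinearMap.ker (K.liftQ f hK)).IsSuperfluous := by
  rw [Submodule.ker_liftQ]
  exact hf.map (mkQ_surjective K)

end Submodule

namespace Module

variable {R P E : Type*} [Ring R] [AddCommGroup P] [Module R P] [AddCommGroup E] [Module R E]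
  {π : P →ₗ[R] E} {S : Set R}

open Submodule

theorem set_smul_top_ne_top_iff_of_isSimpleModule [IsSimpleModule R E]
    (hπ : Function.Surjective π) (hker : (LinearMap.ker π).IsSuperfluous) :
    S • (⊤ : Submodule R P) ≠ ⊤ ↔ ∀ s ∈ S, ∀ v : E, s • v = 0 := by
  constructor
  · intro hne s hs v
    obtain ⟨m, rfl⟩ := hπ v
    rcases eq_bot_or_eq_top ((S • ⊤ : Submodule R P).map π) with hbot | htop
    · rw [← map_smul]
      exact LinearMap.le_ker_iff_map.2 hbot (mem_set_smul_of_mem_mem hs mem_top)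
    · refine absurd (hker _ ?_) hne
      rw [← comap_map_eq, htop, comap_top]
  · intro hS htop
    have hπ0 : π = 0 := LinearMap.ker_eq_top.1 (top_le_iff.1 (htop ▸ set_smul_top_le_ker hS π))
    refine bot_ne_top (α := Submodule R E) ?_
    rw [← LinearMap.range_eq_top.2 hπ, hπ0, LinearMap.range_zero]

theorem Projective.exists_lift_of_quotient_set_smul_top [Module.Projective R P]
    {M₁ M₂ : Type*} [AddCommGroup M₁] [AddCommGroup M₂] [Module R M₁] [Module R M₂]
    (hS : ∀ s ∈ S, ∀ m : M₁, s • m = 0) (f : M₁ →ₗ[R] M₂) (hf : Function.Surjective f)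
    (g : (P ⧸ (S • ⊤ : Submodule R P)) →ₗ[R] M₂) :
    ∃ h : (P ⧸ (S • ⊤ : Submodule R P)) →ₗ[R] M₁, f ∘ₗ h = g := by
  obtain ⟨h, hh⟩ := Module.projective_lifting_property f (g ∘ₗ mkQ _) hf
  exact ⟨liftQ _ h (set_smul_top_le_ker hS h), linearMap_qext _ (by
    rw [LinearMap.comp_assoc, liftQ_mkQ, hh])⟩

end Module

theorem projective_cover_mod_annihilator_general
    (F : Type) [Field F]
    (G : Type) [Group G] [Fintype G] (N : Subgroup G)
    (E : Type) [AddCommGroup E] [Module (MonoidAlgebra F G) E]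
    (P : Type) [AddCommGroup P] [Module (MonoidAlgebra F G) P] :
    let ι : MonoidAlgebra F N →ₐ[F] MonoidAlgebra F G :=
      MonoidAlgebra.mapDomainAlgHom F F N.subtype
    let Jset : Set (MonoidAlgebra F G) :=
      ι '' ((⊥ : Ideal (MonoidAlgebra F N)).jacobson : Set (MonoidAlgebra F N))
    let Iset : Set (MonoidAlgebra F G) := {α : MonoidAlgebra F G | ∀ x ∈ Jset, x * α = 0}
    -- J(F[G])·P and I·P
    let JP : Submodule (MonoidAlgebra F G) P :=
      Submodule.span (MonoidAlgebra F G)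
        {x : P | ∃ j ∈ ((⊥ : Ideal (MonoidAlgebra F G)).jacobson :
          Set (MonoidAlgebra F G)), ∃ m : P, x = j • m}
    let IP : Submodule (MonoidAlgebra F G) P :=
      Submodule.span (MonoidAlgebra F G) {x : P | ∃ i ∈ Iset, ∃ m : P, x = i • m}
    -- E is simple
    IsSimpleModule (MonoidAlgebra F G) E →
    -- P is projective
    Module.Projective (MonoidAlgebra F G) P →
    -- P is indecomposable
    (∀ X Y : Submodule (MonoidAlgebra F G) P, IsCompl X Y → X = ⊥ ∨ Y = ⊥) →
    -- P/(J(F[G])·P) ≅ E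
    Nonempty ((P ⧸ JP) ≃ₗ[MonoidAlgebra F G] E) →
    -- I·E = 0 iff I·P ≠ P
    (((∀ i ∈ Iset, ∀ v : E, i • v = 0) ↔ IP ≠ ⊤) ∧
    -- in that case, P/(I·P) is a projective cover of E over F[G]/I
     ((∀ i ∈ Iset, ∀ v : E, i • v = 0) →
        -- P/(I·P) is a module over F[G]/I (it is killed by I)
        (∀ i ∈ Iset, ∀ q : P ⧸ IP, i • q = 0) ∧
        -- P/(I·P) is projective over F[G]/I : lifting property for F[G]/I-modules
        (∀ (M₁ M₂ : Type) [AddCommGroup M₁] [AddCommGroup M₂]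
            [Module (MonoidAlgebra F G) M₁] [Module (MonoidAlgebra F G) M₂],
          (∀ i ∈ Iset, ∀ m : M₁, i • m = 0) → (∀ i ∈ Iset, ∀ m : M₂, i • m = 0) →
          ∀ f : M₁ →ₗ[MonoidAlgebra F G] M₂, Function.Surjective f →
          ∀ g : (P ⧸ IP) →ₗ[MonoidAlgebra F G] M₂,
            ∃ h : (P ⧸ IP) →ₗ[MonoidAlgebra F G] M₁, f ∘ₗ h = g) ∧
        -- P/(I·P) covers E : an epimorphism onto E with superfluous kernel
        (∃ π : (P ⧸ IP) →ₗ[MonoidAlgebra F G] E, Function.Surjective π ∧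
          ∀ X : Submodule (MonoidAlgebra F G) (P ⧸ IP),
            X ⊔ LinearMap.ker π = ⊤ → X = ⊤))) := by
  intro ι Jset Iset JP IP _ _ _ ⟨φ⟩
  have : IsArtinianRing (MonoidAlgebra F G) := IsArtinianRing.of_finite F _
  set π : P →ₗ[MonoidAlgebra F G] E := φ.toLinearMap ∘ₗ JP.mkQ
  have hπ : Function.Surjective π := φ.surjective.comp JP.mkQ_surjective
  have hker : (LinearMap.ker π).IsSuperfluous := by
    have hJP : JP = (⊥ : Ideal (MonoidAlgebra F G)).jacobson • ⊤ :=
      (Submodule.span_setOf_smul_eq_set_smul_top _).trans Submodule.coe_set_smul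
    rw [LinearEquiv.ker_comp, Submodule.ker_mkQ, hJP]
    exact Submodule.isSuperfluous_smul_top_of_isNilpotent
      IsArtinianRing.isNilpotent_jacobson_bot
  have hIP : IP = Iset • ⊤ := Submodule.span_setOf_smul_eq_set_smul_top Iset
  clear_value IP
  subst hIP
  refine ⟨(Module.set_smul_top_ne_top_iff_of_isSimpleModule hπ hker).symm, fun hS => ?_⟩
  have hle := Submodule.set_smul_top_le_ker hS π
  exact ⟨fun s hs => Submodule.smul_eq_zero_of_mem_of_quotient_set_smul_top hs,
    fun M₁ M₂ _ _ _ _ h₁ _ f hf g =>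
      Module.Projective.exists_lift_of_quotient_set_smul_top h₁ f hf g,
    _, Submodule.liftQ_surjective hle hπ, hker.ker_liftQ hle⟩

/-- Let `I` be the right annihilator of `J(F[N])` in `F[G]`, `E` a simple
`F[G]`-module and `P` a projective cover of `E` (a projective indecomposable module with
`P/(J(F[G])·P) ≅ E`).  Then `I·E = 0` if and only if `I·P ≠ P`; in that case `P/(I·P)` is a
projective cover of `E` over `F[G]/I`:  it is killed by `I`, it has the lifting property with
respect to surjections of modules killed by `I`, and it admits an essential epimorphism
onto `E`. -/
theorem projective_cover_mod_annihilator
    (F : Type) [Field F] (p : ℕ) (hp : 0 < p) (hchar : CharP F p)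
    (G : Type) [Group G] [Fintype G] (N : Subgroup G) (hN : N.Normal)
    (E : Type) [AddCommGroup E] [Module (MonoidAlgebra F G) E]
    (P : Type) [AddCommGroup P] [Module (MonoidAlgebra F G) P] :
    let ι : MonoidAlgebra F N →ₐ[F] MonoidAlgebra F G :=
      MonoidAlgebra.mapDomainAlgHom F F N.subtype
    let Jset : Set (MonoidAlgebra F G) :=
      ι '' ((⊥ : Ideal (MonoidAlgebra F N)).jacobson : Set (MonoidAlgebra F N))
    let Iset : Set (MonoidAlgebra F G) := {α : MonoidAlgebra F G | ∀ x ∈ Jset, x * α = 0}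
    -- J(F[G])·P and I·P
    let JP : Submodule (MonoidAlgebra F G) P :=
      Submodule.span (MonoidAlgebra F G)
        {x : P | ∃ j ∈ ((⊥ : Ideal (MonoidAlgebra F G)).jacobson :
          Set (MonoidAlgebra F G)), ∃ m : P, x = j • m}
    let IP : Submodule (MonoidAlgebra F G) P :=
      Submodule.span (MonoidAlgebra F G) {x : P | ∃ i ∈ Iset, ∃ m : P, x = i • m}
    -- E is simple
    IsSimpleModule (MonoidAlgebra F G) E →
    -- P is projective
    Module.Projective (MonoidAlgebra F G) P →
    -- P is indecomposable
    (∀ X Y : Submodule (MonoidAlgebra F G) P, IsCompl X Y → X = ⊥ ∨ Y = ⊥) →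
    -- P/(J(F[G])·P) ≅ E
    Nonempty ((P ⧸ JP) ≃ₗ[MonoidAlgebra F G] E) →
    -- I·E = 0 iff I·P ≠ P
    (((∀ i ∈ Iset, ∀ v : E, i • v = 0) ↔ IP ≠ ⊤) ∧
    -- in that case, P/(I·P) is a projective cover of E over F[G]/I
     ((∀ i ∈ Iset, ∀ v : E, i • v = 0) →
        -- P/(I·P) is a module over F[G]/I (it is killed by I)
        (∀ i ∈ Iset, ∀ q : P ⧸ IP, i • q = 0) ∧
        -- P/(I·P) is projective over F[G]/I : lifting property for F[G]/I-modules
        (∀ (M₁ M₂ : Type) [AddCommGroup M₁] [AddCommGroup M₂]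
            [Module (MonoidAlgebra F G) M₁] [Module (MonoidAlgebra F G) M₂],
          (∀ i ∈ Iset, ∀ m : M₁, i • m = 0) → (∀ i ∈ Iset, ∀ m : M₂, i • m = 0) →
          ∀ f : M₁ →ₗ[MonoidAlgebra F G] M₂, Function.Surjective f →
          ∀ g : (P ⧸ IP) →ₗ[MonoidAlgebra F G] M₂,
            ∃ h : (P ⧸ IP) →ₗ[MonoidAlgebra F G] M₁, f ∘ₗ h = g) ∧
        -- P/(I·P) covers E : an epimorphism onto E with superfluous kernel
        (∃ π : (P ⧸ IP) →ₗ[MonoidAlgebra F G] E, Function.Surjective π ∧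
          ∀ X : Submodule (MonoidAlgebra F G) (P ⧸ IP),
            X ⊔ LinearMap.ker π = ⊤ → X = ⊤))) :=
  projective_cover_mod_annihilator_general F G N E P
end

section
/- Let G be a finite group, N a normal subgroup of G, and F an algebraically closed field of characteristic p > 0. Let P be a projective indecomposable F[G]-module and let U be a simple F[N]-submodule of the restriction of P to N. Then there exists a simple F[G]-submodule E of P such that U is isomorphic to an F[N]-submodule of the restriction of E to N. -/
/-!
For `g : G`, the action of `g` on `P` is semilinear for the automorphism of `F[N]` induced by
conjugation with `g`, so it carries the simple `F[N]`-submodule `U` to a simple submodule `g • U`.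
Pick `u ≠ 0` in `U`. Since `F[G]` is finite-dimensional, the cyclic module `F[G] u` contains a
simple `F[G]`-submodule `E`, and `E` in turn contains a simple `F[N]`-submodule `V`.
Since `F[G] u ⊆ ∑_g g • U`, the simple module `V` lies in a sum of simple modules, hence
`V ≅ g • U` for some `g`; translating back by `g⁻¹`, which preserves `E`, embeds `U` into `E`.
-/

open MonoidAlgebra Submodule

theorem Submodule.exists_isSimpleModule_le_of_ne_bot {R M : Type*} [Ring R] [IsArtinianRing R]
    [AddCommGroup M] [Module R M] {m : Submodule R M} (hm : m ≠ ⊥) :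
    ∃ S ≤ m, IsSimpleModule R S := by
  obtain ⟨x, hxm, hx⟩ := (Submodule.ne_bot_iff m).mp hm
  have : IsArtinian R (R ∙ x) := isArtinian_of_fg_of_artinian _ (fg_span_singleton x)
  have : IsAtomic (Submodule R (R ∙ x)) := isAtomic_of_orderBot_wellFounded_lt wellFounded_lt
  obtain ⟨a, ha, -⟩ := (eq_bot_or_exists_atom_le (⊤ : Submodule R (R ∙ x))).resolve_left
    (by simpa [Submodule.eq_bot_iff] using ⟨x, mem_span_singleton_self x, hx⟩)
  refine ⟨a.map (R ∙ x).subtype, (map_subtype_le _ a).trans (span_le.mpr (by simpa)), ?_⟩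
  have := isSimpleModule_iff_isAtom.mpr ha
  exact .congr (a.equivMapOfInjective _ (R ∙ x).injective_subtype).symm

namespace MonoidAlgebra

variable {F G : Type*} [Field F] [Group G] {N : Subgroup G}

noncomputable instance moduleSubgroup : Module (MonoidAlgebra F N) (MonoidAlgebra F G) :=
  Module.compHom _ (mapDomainAlgHom F F N.subtype).toRingHom

theorem subgroup_smul_def (a : MonoidAlgebra F N) (b : MonoidAlgebra F G) :
    a • b = mapDomain N.subtype a * b :=
  rfl

variable (F N) in
noncomputable def conjRingEquiv [N.Normal] (g : G) : MonoidAlgebra F N ≃+* MonoidAlgebra F N :=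
  mapDomainRingEquiv F (MulAut.conjNormal g)

instance [N.Normal] (g : G) :
    RingHomInvPair (conjRingEquiv F N g : MonoidAlgebra F N →+* MonoidAlgebra F N)
      (conjRingEquiv F N g).symm :=
  .of_ringEquiv _

instance [N.Normal] (g : G) :
    RingHomInvPair ((conjRingEquiv F N g).symm : MonoidAlgebra F N →+* MonoidAlgebra F N)
      (conjRingEquiv F N g) :=
  .of_ringEquiv_symm _

theorem single_one_mul_mapDomain_subtype [N.Normal] (g : G) (a : MonoidAlgebra F N) :
    single g 1 * mapDomain N.subtype a =
      mapDomain N.subtype (conjRingEquiv F N g a) * single g 1 := by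
  induction a using MonoidAlgebra.induction_linear with
  | zero => simp only [map_zero, mapDomain_zero, mul_zero, zero_mul]
  | add a b ha hb => simp only [map_add, mapDomain_add, mul_add, add_mul, ha, hb]
  | single n c => simp [conjRingEquiv, mapDomain_single, single_mul_single, MulAut.conjNormal_apply]

variable {P : Type*} [AddCommGroup P] [Module (MonoidAlgebra F G) P]
  [Module (MonoidAlgebra F N) P] [IsScalarTower (MonoidAlgebra F N) (MonoidAlgebra F G) P]

theorem subgroup_smul_eq (a : MonoidAlgebra F N) (x : P) :
    a • x = mapDomain N.subtype a • x := by
  rw [← smul_one_smul (MonoidAlgebra F G) a x, subgroup_smul_def, mul_one]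

variable [N.Normal]

theorem single_one_smul_smul (g : G) (a : MonoidAlgebra F N) (x : P) :
    single g (1 : F) • a • x = conjRingEquiv F N g a • single g (1 : F) • x := by
  rw [subgroup_smul_eq, subgroup_smul_eq, smul_smul, smul_smul, single_one_mul_mapDomain_subtype]

variable (F N P) in
noncomputable def translateEquiv (g : G) :
    P ≃ₛₗ[(conjRingEquiv F N g : MonoidAlgebra F N →+* MonoidAlgebra F N)] P where
  toFun x := single g (1 : F) • x
  invFun x := single g⁻¹ (1 : F) • x
  map_add' := smul_add _
  map_smul' := single_one_smul_smul g
  left_inv x := by simp [smul_smul, single_mul_single, ← one_def]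
  right_inv x := by simp [smul_smul, single_mul_single, ← one_def]

theorem translateEquiv_apply (g : G) (x : P) :
    translateEquiv F N P g x = single g (1 : F) • x :=
  rfl

theorem isSimpleModule_map_translateEquiv (g : G) (U : Submodule (MonoidAlgebra F N) P)
    [IsSimpleModule (MonoidAlgebra F N) U] :
    IsSimpleModule (MonoidAlgebra F N) (U.map (translateEquiv F N P g).toLinearMap) :=
  isSimpleModule_iff_isAtom.mpr <| ((orderIsoMapComap (translateEquiv F N P g)).isAtom_iff U).mpr
    (isSimpleModule_iff_isAtom.mp ‹_›)

theorem restrictScalars_span_singleton_le_iSup_map_translateEquiv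
    {U : Submodule (MonoidAlgebra F N) P} {x : P} (hx : x ∈ U) :
    (span (MonoidAlgebra F G) {x}).restrictScalars (MonoidAlgebra F N) ≤
      ⨆ g : G, U.map (translateEquiv F N P g).toLinearMap := by
  intro y hy
  obtain ⟨r, rfl⟩ := mem_span_singleton.mp hy
  clear hy
  induction r using MonoidAlgebra.induction_linear with
  | zero => simp
  | add r s hr hs => rw [add_smul]; exact add_mem hr hs
  | single g c =>
    have hc : single g c • x = translateEquiv F N P g (single (1 : N) c • x) := by
      rw [translateEquiv_apply, subgroup_smul_eq, smul_smul, mapDomain_single, single_mul_single]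
      simp
    rw [hc]
    exact le_iSup (fun g => U.map (translateEquiv F N P g).toLinearMap) g
      (mem_map_of_mem (U.smul_mem _ hx))

theorem exists_injective_of_map_translateEquiv {U : Submodule (MonoidAlgebra F N) P}
    {E : Submodule (MonoidAlgebra F G) P} (g : G)
    (f : U.map (translateEquiv F N P g).toLinearMap →ₗ[MonoidAlgebra F N] P)
    (hf : Function.Injective f) (hfE : ∀ x, f x ∈ E) :
    ∃ f' : U →ₗ[MonoidAlgebra F N] P, Function.Injective f' ∧ ∀ u, f' u ∈ E :=
  let e := translateEquiv F N P g
  ⟨e.symm.toLinearMap ∘ₛₗ f ∘ₛₗ (e.submoduleMap U).toLinearMap,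
    e.symm.injective.comp (hf.comp (e.submoduleMap U).injective),
    fun _ => E.smul_mem _ (hfE _)⟩

end MonoidAlgebra

theorem simple_constituent_of_socle_restriction_general
    (F : Type) [Field F]
    (G : Type) [Group G] [Fintype G] (N : Subgroup G) (hN : N.Normal)
    (P : Type) [AddCommGroup P] [Module (MonoidAlgebra F G) P] :
    let ι : MonoidAlgebra F N →ₐ[F] MonoidAlgebra F G :=
      MonoidAlgebra.mapDomainAlgHom F F N.subtype
    let _instP : Module (MonoidAlgebra F N) P := Module.compHom P ι.toRingHom
    -- P projective indecomposable
    Module.Projective (MonoidAlgebra F G) P →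
    (∀ X Y : Submodule (MonoidAlgebra F G) P, IsCompl X Y → X = ⊥ ∨ Y = ⊥) →
    -- U a simple F[N]-submodule of Res_N P
    ∀ U : Submodule (MonoidAlgebra F N) P, IsSimpleModule (MonoidAlgebra F N) U →
      ∃ E : Submodule (MonoidAlgebra F G) P,
        IsSimpleModule (MonoidAlgebra F G) E ∧
        ∃ f : U →ₗ[MonoidAlgebra F N] P,
          Function.Injective f ∧ ∀ u : U, f u ∈ E := by
  intro ι _ _ _ U hU
  have : IsScalarTower (MonoidAlgebra F N) (MonoidAlgebra F G) P :=
    ⟨fun a b x => mul_smul (ι a) b x⟩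
  have : IsArtinianRing (MonoidAlgebra F G) := .of_finite F _
  have : IsArtinianRing (MonoidAlgebra F N) := .of_finite F _
  let conjugates := Set.range fun g : G => U.map (translateEquiv F N P g).toLinearMap
  have : ∀ V : conjugates, IsSimpleModule (MonoidAlgebra F N) V := by
    rintro ⟨_, g, rfl⟩
    exact isSimpleModule_map_translateEquiv g U
  obtain ⟨u, hu, hu0⟩ := (Submodule.ne_bot_iff U).mp (isSimpleModule_iff_isAtom.mp hU).1
  obtain ⟨E, hEu, hE⟩ :=
    exists_isSimpleModule_le_of_ne_bot (m := span (MonoidAlgebra F G) {u}) (by simpa using hu0)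
  obtain ⟨V, hVE, hV⟩ := exists_isSimpleModule_le_of_ne_bot
    (m := E.restrictScalars (MonoidAlgebra F N))
    (by simpa using (isSimpleModule_iff_isAtom.mp hE).1)
  have hV_le : V ≤ sSup conjugates := by
    rw [sSup_range]
    exact hVE.trans ((restrictScalars_mono _ hEu).trans
      (restrictScalars_span_singleton_le_iSup_map_translateEquiv hu))
  obtain ⟨_, ⟨g, rfl⟩, ⟨e⟩⟩ := V.linearEquiv_of_le_sSup conjugates hV_le
  obtain ⟨f, hf, hfE⟩ := exists_injective_of_map_translateEquiv g
    (V.subtype ∘ₗ e.symm.toLinearMap) (V.injective_subtype.comp e.symm.injective)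
    fun x => hVE (e.symm x).2
  exact ⟨E, hE, f, hf, hfE⟩

/-- Let `P` be a projective indecomposable `F[G]`-module and `U` a simple
`F[N]`-submodule of `Res_N P`.  Then there exists a simple `F[G]`-submodule `E` of `P` such
that `U` is isomorphic to an `F[N]`-submodule of `Res_N E` (equivalently: `U` embeds
`F[N]`-linearly into `P` with image inside `E`). -/
theorem simple_constituent_of_socle_restriction
    (F : Type) [Field F] [IsAlgClosed F] (p : ℕ) (hp : 0 < p) (hchar : CharP F p)
    (G : Type) [Group G] [Fintype G] (N : Subgroup G) (hN : N.Normal)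
    (P : Type) [AddCommGroup P] [Module (MonoidAlgebra F G) P] :
    let ι : MonoidAlgebra F N →ₐ[F] MonoidAlgebra F G :=
      MonoidAlgebra.mapDomainAlgHom F F N.subtype
    let _instP : Module (MonoidAlgebra F N) P := Module.compHom P ι.toRingHom
    -- P projective indecomposable
    Module.Projective (MonoidAlgebra F G) P →
    (∀ X Y : Submodule (MonoidAlgebra F G) P, IsCompl X Y → X = ⊥ ∨ Y = ⊥) →
    -- U a simple F[N]-submodule of Res_N P
    ∀ U : Submodule (MonoidAlgebra F N) P, IsSimpleModule (MonoidAlgebra F N) U →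
      ∃ E : Submodule (MonoidAlgebra F G) P,
        IsSimpleModule (MonoidAlgebra F G) E ∧
        ∃ f : U →ₗ[MonoidAlgebra F N] P,
          Function.Injective f ∧ ∀ u : U, f u ∈ E :=
  simple_constituent_of_socle_restriction_general F G N hN P
end
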